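/- For all i ≠ j and each sign ε ∈ {+1,−1}, the idempotent I_{ij}^ε satisfies the inhomogeneous proper-value equation (K+1)(I_{ij}^ε) = 2 I_{ij}^ε − 1 (proper value 2, co-value −1). -/

import Mathlib

/-!
Since `(w^l)² = -1`, each term of `K+1` is `J_l(U) w^l = ½ (w^l U w^l + U)`, so
`(K+1)(U) = ½ (Σ_l w^l U w^l + 3U)`. For `U = 1` the sum is `-3`, giving `(K+1)(1) = 0`.
For `U = X_i X_j = e_i e_j ⊗ e_i e_j`, the bivector `e_i e_j` commutes with the one
`e_{l+1} e_{l+2}` proportional to it and anticommutes with the other two, so the sum is `U` and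
`(K+1)(U) = 2U`. By linearity `(K+1)(I_{ij}^ε) = ε X_i X_j = 2 I_{ij}^ε - 1`.
-/

open scoped TensorProduct

noncomputable section

/-- The standard positive-definite quadratic form on `ℝ³`. -/
abbrev Q3 : QuadraticForm ℝ (Fin 3 → ℝ) :=
  QuadraticMap.weightedSumSquares ℝ (fun _ : Fin 3 => (1 : ℝ))

/-- The Clifford algebra of 3-dimensional Euclidean space. -/
abbrev Cl3 : Type := CliffordAlgebra Q3

/-- The tensor product of two copies of `Cl3`, as ℝ-algebras. -/
abbrev A3 : Type := Cl3 ⊗[ℝ] Cl3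

/-- The generators `e₁, e₂, e₃` (indexed by `Fin 3`). -/
def e (l : Fin 3) : Cl3 := CliffordAlgebra.ι Q3 (Pi.single l 1)

/-- `X_l := e_l ⊗ e_l`. -/
def X (l : Fin 3) : A3 := e l ⊗ₜ[ℝ] e l

/-- `w^i := (e_j e_k) ⊗ 1` for `(i,j,k)` a cyclic permutation of the indices. -/
def w (i : Fin 3) : A3 := (e (i + 1) * e (i + 2)) ⊗ₜ[ℝ] (1 : Cl3)

/-- The (ℝ-linear) operators `J_l(U) := (1/2)(w^l U − U w^l)`. -/
def J (l : Fin 3) (U : A3) : A3 := (1/2 : ℝ) • (w l * U - U * w l)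

/-- Kähler's total angular momentum operator `K+1`. -/
def K1 (U : A3) : A3 := J 0 U * w 0 + J 1 U * w 1 + J 2 U * w 2

/-- The idempotents `I_{ij}^ε := (1/2)(1 + ε X_i X_j)`. -/
def Iem (i j : Fin 3) (ε : ℝ) : A3 := (1/2 : ℝ) • ((1 : A3) + ε • (X i * X j))

/-- The idempotents `P_l^δ := (1/2)(1 + δ X_l)`. -/
def P (l : Fin 3) (δ : ℝ) : A3 := (1/2 : ℝ) • ((1 : A3) + δ • X l)

section WeightedSumSquares

variable {ι R : Type*} [Fintype ι] [DecidableEq ι] [CommSemiring R]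

lemma QuadraticMap.weightedSumSquares_single (wt : ι → R) (l : ι) :
    weightedSumSquares R wt (Pi.single l 1) = wt l := by
  simp [Pi.single_apply]

lemma QuadraticMap.isOrtho_weightedSumSquares_single (wt : ι → R) {l m : ι} (h : l ≠ m) :
    (weightedSumSquares R wt).IsOrtho (Pi.single l 1) (Pi.single m 1) := by
  rw [isOrtho_def]
  simp only [weightedSumSquares_apply, Pi.add_apply, ← Finset.sum_add_distrib, ← smul_add]
  refine Finset.sum_congr rfl fun k _ => ?_
  by_cases hl : k = l <;> by_cases hm : k = m <;> simp_all

end WeightedSumSquares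

lemma mul_mul_self_eq_neg_one_of_anticomm {R : Type*} [Ring R] {a b : R}
    (ha : a * a = 1) (hb : b * b = 1) (hab : a * b = -(b * a)) : a * b * (a * b) = -1 := by
  rw [mul_assoc, ← mul_assoc b, ← neg_neg (b * a), ← hab, neg_mul, mul_assoc, hb, mul_one,
    mul_neg, ha]

lemma mul_sub_mul_mul_of_mul_self_eq_neg_one {R : Type*} [Ring R] {w : R} (hw : w * w = -1)
    (U : R) : (w * U - U * w) * w = w * U * w + U := by
  rw [sub_mul, mul_assoc U, hw, mul_neg_one, sub_neg_eq_add]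

lemma e_mul_self (l : Fin 3) : e l * e l = 1 := by
  rw [e, CliffordAlgebra.ι_sq_scalar, QuadraticMap.weightedSumSquares_single, map_one]

lemma e_mul_e_of_ne {l m : Fin 3} (h : l ≠ m) : e l * e m = -(e m * e l) :=
  CliffordAlgebra.ι_mul_ι_comm_of_isOrtho (QuadraticMap.isOrtho_weightedSumSquares_single _ h)

lemma e_mul_e_of_lt {l m : Fin 3} (h : m < l) : e l * e m = -(e m * e l) :=
  e_mul_e_of_ne h.ne'

lemma e_mul_e_mul_of_lt {l m : Fin 3} (h : m < l) (x : Cl3) :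
    e l * (e m * x) = -(e m * (e l * x)) := by
  rw [← mul_assoc, e_mul_e_of_lt h, neg_mul, mul_assoc]

lemma e_mul_e_mul_self (l : Fin 3) (x : Cl3) : e l * (e l * x) = x := by
  rw [← mul_assoc, e_mul_self, one_mul]

lemma w_mul_self (l : Fin 3) : w l * w l = -1 := by
  have hne : l + 1 ≠ l + 2 := by fin_cases l <;> decide
  rw [w, Algebra.TensorProduct.tmul_mul_tmul, mul_one,
    mul_mul_self_eq_neg_one_of_anticomm (e_mul_self _) (e_mul_self _) (e_mul_e_of_ne hne),
    TensorProduct.neg_tmul, Algebra.TensorProduct.one_def]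

lemma J_mul_w (l : Fin 3) (U : A3) : J l U * w l = (1/2 : ℝ) • (w l * U * w l + U) := by
  rw [J, smul_mul_assoc, mul_sub_mul_mul_of_mul_self_eq_neg_one (w_mul_self l)]

lemma K1_eq (U : A3) :
    K1 U = (1/2 : ℝ) • (w 0 * U * w 0 + w 1 * U * w 1 + w 2 * U * w 2 + 3 • U) := by
  rw [K1, J_mul_w, J_mul_w, J_mul_w]
  module

lemma K1_add (U V : A3) : K1 (U + V) = K1 U + K1 V := by
  simp only [K1_eq, mul_add, add_mul]
  module

lemma K1_smul (r : ℝ) (U : A3) : K1 (r • U) = r • K1 U := by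
  simp only [K1_eq, mul_smul_comm, smul_mul_assoc]
  module

lemma K1_one : K1 1 = 0 := by
  simp only [K1_eq, mul_one, w_mul_self]
  module

/-- Each `e_{l+1} e_{l+2}` either is `± e_i e_j` (and commutes with it) or shares exactly one
generator with it (and anticommutes with it); hence two of the three terms are `+ e_i e_j` and
one is `- e_i e_j`. -/
lemma sum_bivector_conj_e_mul_e {i j : Fin 3} (hij : i ≠ j) :
    ∑ l : Fin 3, e (l + 1) * e (l + 2) * (e i * e j) * (e (l + 1) * e (l + 2)) = e i * e j := by
  fin_cases i <;> fin_cases j <;> simp at hij <;>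
    simp [Fin.sum_univ_three, mul_assoc, e_mul_self, e_mul_e_mul_self, e_mul_e_of_lt,
      e_mul_e_mul_of_lt]

lemma K1_X_mul_X {i j : Fin 3} (hij : i ≠ j) : K1 (X i * X j) = (2 : ℝ) • (X i * X j) := by
  have hconj : ∀ l, w l * (X i * X j) * w l =
      (e (l + 1) * e (l + 2) * (e i * e j) * (e (l + 1) * e (l + 2))) ⊗ₜ[ℝ] (e i * e j) := by
    intro l
    simp only [w, X, Algebra.TensorProduct.tmul_mul_tmul, one_mul, mul_one]
  have hsum := sum_bivector_conj_e_mul_e hij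
  rw [Fin.sum_univ_three] at hsum
  rw [K1_eq, hconj, hconj, hconj, ← TensorProduct.add_tmul, ← TensorProduct.add_tmul, hsum, X, X,
    Algebra.TensorProduct.tmul_mul_tmul]
  module

theorem stmt4_general (i j : Fin 3) (hij : i ≠ j) (ε : ℝ) :
    K1 (Iem i j ε) = 2 * Iem i j ε - 1 := by
  rw [Iem, K1_smul, K1_add, K1_one, K1_smul, K1_X_mul_X hij, two_mul]
  module

/-- For `i ≠ j` and each sign `ε`, the idempotent `I_{ij}^ε` satisfies the
inhomogeneous proper-value equation `(K+1)(I_{ij}^ε) = 2 I_{ij}^ε − 1`. -/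
theorem stmt4 (i j : Fin 3) (hij : i ≠ j) (ε : ℝ) (hε : ε = 1 ∨ ε = -1) :
    K1 (Iem i j ε) = 2 * Iem i j ε - 1 :=
  stmt4_general i j hij ε
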